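/- arXiv:0906.3227 — 2 statements merged into one kernel-verified Lean document; each statement's English description precedes it below -/
import Mathlib

section
/- It is sufficient to simulate all one-way cellular automata to be intrinsically universal: if a cellular automaton simulates every one-way cellular automaton (over every finite state set), then it simulates every cellular automaton. -/
/-- Global map of a one-dimensional radius-1 cellular automaton with local rule `f`. -/
def globalMap {S : Type*} (f : S → S → S → S) (c : ℤ → S) : ℤ → S :=
  fun i => f (c (i - 1)) (c i) (c (i + 1))

/-- The shift `σ^s` (by `s ∈ ℤ`): `σ^s(c)(i) = c(i + s)`. -/
def shiftBy {S : Type*} (s : ℤ) (c : ℤ → S) : ℤ → S :=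
  fun i => c (i + s)

/-- `x ∈ e⁻¹(c)`: each length-`m` block of `x` is mapped by `e` to the
corresponding length-`m'` block of `c`. -/
def Decodes {S T : Type*} {m m' : ℕ} (e : (Fin m → S) → (Fin m' → T))
    (x : ℤ → S) (c : ℤ → T) : Prop :=
  ∀ i : ℤ, (e fun j => x (i * (m : ℤ) + (j : ℤ))) = fun (j : Fin m') => c (i * (m' : ℤ) + (j : ℤ))

/-- The CA with local rule `f` simulates the CA with local rule `g`. -/
def Simulates {S T : Type*} (f : S → S → S → S) (g : T → T → T → T) : Prop :=
  ∃ (m m' t t' : ℕ) (s : ℤ) (e : (Fin m → S) → (Fin m' → T)),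
    0 < m ∧ 0 < m' ∧ 0 < t ∧ 0 < t' ∧ Function.Surjective e ∧
    ∀ (c : ℤ → T) (x : ℤ → S), Decodes e x c →
      Decodes e (shiftBy s ((globalMap f)^[t] x)) ((globalMap g)^[t'] c)

/-- A CA is one-way if its local rule does not depend on the third argument. -/
def OneWay {S : Type*} (f : S → S → S → S) : Prop :=
  ∀ x y z z' : S, f x y z = f x y z'

/-!
Given any rule `g` on `T`, group cells in pairs. The pair at `i` together with its right neighbour
covers the cells `2i, …, 2i+3`, which determine the next states of the cells `2i+1` and `2i+2`;
so a one-way rule on pairs computes one step of `g` followed by a shift of one cell. A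
simulation of this one-way rule by `f`, iterated `2n` times (`n` pairs per block), shifts the
simulated configuration of `g` by a whole number of blocks, and that shift is undone by shifting
the configuration of `f` by the same number of its own blocks.
-/

section Shift

variable {S : Type*}

@[simp]
lemma shiftBy_zero (c : ℤ → S) : shiftBy 0 c = c := by
  funext i; simp [shiftBy]

lemma shiftBy_shiftBy (a b : ℤ) (c : ℤ → S) : shiftBy a (shiftBy b c) = shiftBy (a + b) c := by
  funext i; simp only [shiftBy, add_assoc, add_comm a b]

lemma globalMap_shiftBy (f : S → S → S → S) (s : ℤ) (c : ℤ → S) :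
    globalMap f (shiftBy s c) = shiftBy s (globalMap f c) := by
  funext i
  simp only [globalMap, shiftBy, sub_add_eq_add_sub, add_right_comm i s 1]

lemma iterate_globalMap_shiftBy (f : S → S → S → S) (n : ℕ) (s : ℤ) (c : ℤ → S) :
    (globalMap f)^[n] (shiftBy s c) = shiftBy s ((globalMap f)^[n] c) :=
  Function.Commute.iterate_left (fun c => globalMap_shiftBy f s c) n c

end Shift

namespace Decodes

variable {S T : Type*} {m m' : ℕ} {e : (Fin m → S) → (Fin m' → T)} {x : ℤ → S} {c : ℤ → T}

lemma shiftBy_blocks (h : Decodes e x c) (a : ℤ) :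
    Decodes e (shiftBy (a * m) x) (shiftBy (a * m') c) := by
  intro i
  simpa only [shiftBy, add_mul, add_right_comm _ (a * _)] using h (i + a)

lemma iterate_mul {f : S → S → S → S} {g : T → T → T → T} {t t' : ℕ} {s : ℤ}
    (hstep : ∀ (c : ℤ → T) (x : ℤ → S), Decodes e x c →
      Decodes e (shiftBy s ((globalMap f)^[t] x)) ((globalMap g)^[t'] c))
    (h : Decodes e x c) (k : ℕ) :
    Decodes e (shiftBy (k * s) ((globalMap f)^[k * t] x)) ((globalMap g)^[k * t'] c) := by
  induction k with
  | zero => simpa using h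
  | succ k ih =>
    have := hstep _ _ ih
    rw [iterate_globalMap_shiftBy, shiftBy_shiftBy, ← Function.iterate_add_apply,
      ← Function.iterate_add_apply] at this
    convert this using 3 <;> push_cast <;> ring

end Decodes

section Pairs

variable {T : Type*}

def pairUp (c : ℤ → T) : ℤ → Fin 2 → T :=
  fun i b => c (2 * i + b)

def pairRule (g : T → T → T → T) : (Fin 2 → T) → (Fin 2 → T) → (Fin 2 → T) → (Fin 2 → T) :=
  fun p q _ => ![g (p 0) (p 1) (q 0), g (p 1) (q 0) (q 1)]

lemma pairRule_oneWay (g : T → T → T → T) : OneWay (pairRule g) :=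
  fun _ _ _ _ => rfl

lemma globalMap_pairRule_pairUp (g : T → T → T → T) (c : ℤ → T) :
    globalMap (pairRule g) (pairUp c) = pairUp (shiftBy (-1) (globalMap g c)) := by
  funext i b
  fin_cases b <;> simp [globalMap, pairRule, pairUp, shiftBy] <;> ring_nf

lemma iterate_globalMap_pairRule_pairUp (g : T → T → T → T) (n : ℕ) (c : ℤ → T) :
    (globalMap (pairRule g))^[n] (pairUp c) = pairUp (shiftBy (-n) ((globalMap g)^[n] c)) := by
  induction n with
  | zero => simp
  | succ n ih =>
    rw [Function.iterate_succ_apply', ih, globalMap_pairRule_pairUp, globalMap_shiftBy,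
      shiftBy_shiftBy, ← Function.iterate_succ_apply' (globalMap g), Nat.cast_succ, neg_add_rev]

def unpairEquiv (n : ℕ) : (Fin n → Fin 2 → T) ≃ (Fin (n * 2) → T) :=
  (Equiv.curry _ _ _).symm.trans (finProdFinEquiv.arrowCongr (Equiv.refl T))

lemma unpairEquiv_pairUp_block (n : ℕ) (k : ℤ) (c : ℤ → T) :
    unpairEquiv n (fun j => pairUp c (k + j)) = fun l : Fin (n * 2) => c (2 * k + l) := by
  funext l
  simp only [unpairEquiv, Equiv.trans_apply, Equiv.arrowCongr_apply, Function.comp_apply,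
    finProdFinEquiv_symm_apply, Equiv.curry_symm_apply, Function.uncurry_apply_pair, pairUp,
    Equiv.coe_refl, id_eq]
  congr 1
  have := Nat.div_add_mod (l : ℕ) 2
  rw [Fin.coe_divNat, Fin.coe_modNat]
  omega

lemma decodes_unpair_iff {S : Type*} {m n : ℕ} (e : (Fin m → S) → Fin n → Fin 2 → T)
    (x : ℤ → S) (c : ℤ → T) :
    Decodes (unpairEquiv n ∘ e) x c ↔ Decodes e x (pairUp c) := by
  refine forall_congr' fun i => ?_
  rw [Function.comp_apply, show i * ((n * 2 : ℕ) : ℤ) = 2 * (i * n) by push_cast; ring,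
    ← unpairEquiv_pairUp_block, Equiv.apply_eq_iff_eq]

end Pairs

theorem simulates_all_one_way_implies_universal_general
    (S : Type) (f : S → S → S → S)
    (huniv : ∀ (T : Type) [Fintype T] (g : T → T → T → T), OneWay g → Simulates f g) :
    ∀ (T : Type) [Fintype T] (g : T → T → T → T), Simulates f g := by
  intro T _ g
  obtain ⟨m, n, t, t', s, e, hm, hn, ht, ht', he, hsim⟩ := huniv _ _ (pairRule_oneWay g)
  refine ⟨m, n * 2, n * 2 * t, n * 2 * t', t' * m + (n * 2 : ℕ) * s, unpairEquiv n ∘ e, hm,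
    by omega, by positivity, by positivity, (unpairEquiv n).surjective.comp he,
    fun c x hx => ?_⟩
  have hpair := ((decodes_unpair_iff e x c).1 hx).iterate_mul hsim (n * 2)
  rw [iterate_globalMap_pairRule_pairUp, ← decodes_unpair_iff] at hpair
  have hshift := hpair.shiftBy_blocks t'
  rwa [shiftBy_shiftBy, shiftBy_shiftBy, show (t' : ℤ) * (n * 2 : ℕ) + -(n * 2 * t' : ℕ) = 0 by
    push_cast; ring, shiftBy_zero] at hshift

/-- If a cellular automaton simulates every one-way cellular automaton, then it
simulates every cellular automaton, i.e. it is intrinsically universal. -/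
theorem simulates_all_one_way_implies_universal
    (S : Type) [Fintype S] (f : S → S → S → S)
    (huniv : ∀ (T : Type) [Fintype T] (g : T → T → T → T), OneWay g → Simulates f g) :
    ∀ (T : Type) [Fintype T] (g : T → T → T → T), Simulates f g :=
  simulates_all_one_way_implies_universal_general S f huniv
end

section
/- The sum of an l-encoding and an m-encoding contains the whole information about the two encoded states: if a is an l-encoding of s, a' is an l-encoding of σ, b is an m-encoding of s', b' is an m-encoding of σ', and a+b = a'+b', then s = σ and s' = σ'. -/
/-- With `L = 8*k+7`, a number `a < 2^L` is an *l-encoding* of the state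
`s ∈ {0,1}^k` if bit `L-1 = 0`, bit `L-2 = 1`, bit `L-3 = 0`, bit `L-4 = 1`,
and in each digit block `i` (bits `3+8*i, …, 3+8*i+7`): `b5 = s i` and
`b4 = b1 = b0 = 0`, all remaining bits being arbitrary. -/
def IsLEnc (k : ℕ) (s : Fin k → Bool) (a : ℕ) : Prop :=
  a < 2 ^ (8 * k + 7) ∧
  a.testBit (8 * k + 6) = false ∧ a.testBit (8 * k + 5) = true ∧
  a.testBit (8 * k + 4) = false ∧ a.testBit (8 * k + 3) = true ∧
  ∀ i : Fin k,
    a.testBit (3 + 8 * (i : ℕ) + 5) = s i ∧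
    a.testBit (3 + 8 * (i : ℕ) + 4) = false ∧
    a.testBit (3 + 8 * (i : ℕ) + 1) = false ∧
    a.testBit (3 + 8 * (i : ℕ)) = false

/-- With `L = 8*k+7`, a number `b < 2^L` is an *m-encoding* of the state
`s' ∈ {0,1}^k` if bits `L-1, L-2, L-3, L-4` are all `0`, and in each digit
block `i`: `b1 = s' i` and `b5 = b4 = b0 = 0`, all remaining bits arbitrary. -/
def IsMEnc (k : ℕ) (s' : Fin k → Bool) (b : ℕ) : Prop :=
  b < 2 ^ (8 * k + 7) ∧
  b.testBit (8 * k + 6) = false ∧ b.testBit (8 * k + 5) = false ∧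
  b.testBit (8 * k + 4) = false ∧ b.testBit (8 * k + 3) = false ∧
  ∀ i : Fin k,
    b.testBit (3 + 8 * (i : ℕ) + 1) = s' i ∧
    b.testBit (3 + 8 * (i : ℕ) + 5) = false ∧
    b.testBit (3 + 8 * (i : ℕ) + 4) = false ∧
    b.testBit (3 + 8 * (i : ℕ)) = false

/-- With `L = 8*k+7`, a number `ℓ < 2^L` is an *l⁰-form* for the state
`t ∈ {0,1}^k` if bit `L-1 = 0`, bit `L-2 = 1`, bit `L-3 = 0`, bit `1 = 1`,
bit `0 = 0`, and in each digit block `i`: `b6 = 1 - t i`, `b5 = 1`, `b2 = 1`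
and `b1 = 1`, all remaining bits arbitrary. -/
def IsL0Form (k : ℕ) (t : Fin k → Bool) (l : ℕ) : Prop :=
  l < 2 ^ (8 * k + 7) ∧
  l.testBit (8 * k + 6) = false ∧ l.testBit (8 * k + 5) = true ∧
  l.testBit (8 * k + 4) = false ∧
  l.testBit 1 = true ∧ l.testBit 0 = false ∧
  ∀ i : Fin k,
    l.testBit (3 + 8 * (i : ℕ) + 6) = !(t i) ∧
    l.testBit (3 + 8 * (i : ℕ) + 5) = true ∧
    l.testBit (3 + 8 * (i : ℕ) + 2) = true ∧
    l.testBit (3 + 8 * (i : ℕ) + 1) = true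

/-! If bit `p` of both summands is `0`, no carry reaches bit `p + 1`, so bit `p + 1` of the
sum is the xor of the summands' bits. In every digit block, bit `b4` vanishes in both encodings
and `b5` in the m-encoding, so `b5` of `a + b` is `s i`; likewise `b0` and `b1` give `s' i`. -/

namespace Nat

lemma mod_two_pow_succ_lt_of_testBit_eq_false {n p : ℕ} (h : n.testBit p = false) :
    n % 2 ^ (p + 1) < 2 ^ p := by
  simp only [testBit_eq_decide_div_mod_eq, decide_eq_false_iff_not, mod_two_ne_one] at h
  rw [mod_pow_succ, h, mul_zero, add_zero]
  exact mod_lt n (by positivity)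

lemma add_div_two_pow_succ_of_testBit_eq_false {a b p : ℕ} (ha : a.testBit p = false)
    (hb : b.testBit p = false) :
    (a + b) / 2 ^ (p + 1) = a / 2 ^ (p + 1) + b / 2 ^ (p + 1) := by
  have hlt := add_lt_add (mod_two_pow_succ_lt_of_testBit_eq_false ha)
    (mod_two_pow_succ_lt_of_testBit_eq_false hb)
  rw [Nat.add_div (by positivity), if_neg (by rw [pow_succ] at hlt ⊢; omega), add_zero]

lemma testBit_add_succ_of_testBit_eq_false {a b p : ℕ} (ha : a.testBit p = false)
    (hb : b.testBit p = false) :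
    (a + b).testBit (p + 1) = (a.testBit (p + 1) ^^ b.testBit (p + 1)) := by
  simp only [testBit_eq_decide_div_mod_eq, add_div_two_pow_succ_of_testBit_eq_false ha hb]
  rcases mod_two_eq_zero_or_one (a / 2 ^ (p + 1)) with h | h <;>
    rcases mod_two_eq_zero_or_one (b / 2 ^ (p + 1)) with h' | h' <;>
    simp [add_mod, h, h']

end Nat

variable {k : ℕ} {s s' : Fin k → Bool} {a b : ℕ}

lemma IsLEnc.testBit_add_of_isMEnc (ha : IsLEnc k s a) (hb : IsMEnc k s' b) (i : Fin k) :
    (a + b).testBit (3 + 8 * (i : ℕ) + 5) = s i := by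
  obtain ⟨ha5, ha4, -, -⟩ := ha.2.2.2.2.2 i
  obtain ⟨-, hb5, hb4, -⟩ := hb.2.2.2.2.2 i
  rw [Nat.testBit_add_succ_of_testBit_eq_false ha4 hb4, ha5, hb5, Bool.xor_false]

lemma IsMEnc.testBit_add_of_isLEnc (ha : IsLEnc k s a) (hb : IsMEnc k s' b) (i : Fin k) :
    (a + b).testBit (3 + 8 * (i : ℕ) + 1) = s' i := by
  obtain ⟨-, -, ha1, ha0⟩ := ha.2.2.2.2.2 i
  obtain ⟨hb1, -, -, hb0⟩ := hb.2.2.2.2.2 i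
  rw [Nat.testBit_add_succ_of_testBit_eq_false ha0 hb0, ha1, hb1, Bool.false_xor]

theorem sum_l_m_encoding_injective_on_states_general
    (k : ℕ) (s σ s' σ' : Fin k → Bool) (a a' b b' : ℕ)
    (ha : IsLEnc k s a) (ha' : IsLEnc k σ a')
    (hb : IsMEnc k s' b) (hb' : IsMEnc k σ' b')
    (hsum : a + b = a' + b') :
    s = σ ∧ s' = σ' := by
  constructor <;> funext i
  · rw [← ha.testBit_add_of_isMEnc hb, hsum, ha'.testBit_add_of_isMEnc hb']
  · rw [← hb.testBit_add_of_isLEnc ha, hsum, hb'.testBit_add_of_isLEnc ha']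

/-- The sum of an l-encoding and an m-encoding determines both encoded states. -/
theorem sum_l_m_encoding_injective_on_states
    (k : ℕ) (hk : 1 ≤ k) (s σ s' σ' : Fin k → Bool) (a a' b b' : ℕ)
    (ha : IsLEnc k s a) (ha' : IsLEnc k σ a')
    (hb : IsMEnc k s' b) (hb' : IsMEnc k σ' b')
    (hsum : a + b = a' + b') :
    s = σ ∧ s' = σ' :=
  sum_l_m_encoding_injective_on_states_general k s σ s' σ' a a' b b' ha ha' hb hb' hsum
end
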